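/- Let G = (V, E) be a finite connected graph with edge weights in W, (M, W, met, mr, ≺) a bounded monotonic metric with ≺ a strict linear order on a finite set M, and fix a set R ⊆ V of roots. Define μ(v, ρ) for v ∈ V, ρ ∈ R as the maximum (w.r.t. ≺) over all paths from ρ to v of the value obtained by iterating met along the path starting from mr. Then for every v ∈ V and every neighbor u of v (with edge weight w_{u,v}), met(max_{ρ∈R} μ(u,ρ), w_{u,v}) ⪯ max_{ρ∈R} μ(v,ρ). -/
import Mathlib

def walkMetric {V M W : Type*} (met : M → W → M) (wf : Sym2 V → W)
    {G : SimpleGraph V} {a b : V} (m : M) (p : G.Walk a b) : M :=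
  p.edges.foldl (fun acc e => met acc (wf e)) m

noncomputable def mu {V M W : Type*} [Fintype V] [DecidableEq V] [LinearOrder M]
    (met : M → W → M) (wf : Sym2 V → W) (mr : M)
    (G : SimpleGraph V) [DecidableRel G.Adj] (hG : G.Connected) (v ρ : V) : M :=
  (Finset.univ : Finset (G.Path ρ v)).sup'
    (Finset.univ_nonempty_iff.mpr ((hG.preconnected ρ v).elim fun p => ⟨p.toPath⟩))
    (fun p => walkMetric met wf mr p.val)

section aux
variable {V M W : Type*} [LinearOrder M] (met : M → W → M) (wf : Sym2 V → W)

lemma wm_foldl_mono {α : Type*} (f : M → α → M)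
    (hf : ∀ (m m' : M) (a : α), m ≤ m' → f m a ≤ f m' a) :
    ∀ (l : List α) (m m' : M), m ≤ m' → l.foldl f m ≤ l.foldl f m'
  | [], _, _, h => h
  | a :: l, m, m', h => wm_foldl_mono f hf l _ _ (hf _ _ _ h)

lemma wm_foldl_le {α : Type*} (f : M → α → M)
    (hf : ∀ (m m' : M) (a : α), m ≤ m' → f m a ≤ f m' a)
    (hb : ∀ (m : M) (a : α), f m a ≤ m) :
    ∀ (l : List α) (m : M), l.foldl f m ≤ m
  | [], m => le_refl m
  | a :: l, m => le_trans (wm_foldl_le f hf hb l (f m a)) (hb m a)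

variable (hmono : ∀ (m m' : M) (w : W), m ≤ m' → met m w ≤ met m' w)
variable (hb : ∀ (m : M) (w : W), met m w ≤ m)

lemma walkMetric_append {G : SimpleGraph V} {a b c : V} (m : M)
    (p : G.Walk a b) (q : G.Walk b c) :
    walkMetric met wf m (p.append q)
      = walkMetric met wf (walkMetric met wf m p) q := by
  simp [walkMetric, List.foldl_append]

lemma walkMetric_cons {G : SimpleGraph V} {a b c : V} (m : M)
    (h : G.Adj a b) (p : G.Walk b c) :
    walkMetric met wf m (SimpleGraph.Walk.cons h p)
      = walkMetric met wf (met m (wf s(a, b))) p := by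
  simp [walkMetric]

include hmono in
lemma walkMetric_mono {G : SimpleGraph V} {a b : V} {m m' : M} (h : m ≤ m')
    (p : G.Walk a b) : walkMetric met wf m p ≤ walkMetric met wf m' p :=
  wm_foldl_mono _ (fun _ _ e hle => hmono _ _ (wf e) hle) p.edges m m' h

include hmono hb in
lemma walkMetric_le {G : SimpleGraph V} {a b : V} (m : M) (p : G.Walk a b) :
    walkMetric met wf m p ≤ m :=
  wm_foldl_le _ (fun _ _ e hle => hmono _ _ (wf e) hle)
    (fun m e => hb m (wf e)) p.edges m

include hmono hb in
lemma walkMetric_le_bypass [DecidableEq V] {G : SimpleGraph V} :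
    ∀ {a b : V} (p : G.Walk a b) (m : M),
      walkMetric met wf m p ≤ walkMetric met wf m p.bypass
  | _, _, SimpleGraph.Walk.nil, m => le_refl _
  | a, b, SimpleGraph.Walk.cons ha p, m => by
    rw [SimpleGraph.Walk.bypass]
    split_ifs with hs
    · calc walkMetric met wf m (SimpleGraph.Walk.cons ha p)
          = walkMetric met wf (met m (wf _)) p := walkMetric_cons met wf m ha p
        _ ≤ walkMetric met wf (met m (wf _)) p.bypass :=
            walkMetric_le_bypass p _
        _ ≤ walkMetric met wf m p.bypass :=
            walkMetric_mono met wf hmono (hb _ _) _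
        _ = walkMetric met wf (walkMetric met wf m (p.bypass.takeUntil a hs))
              (p.bypass.dropUntil a hs) := by
            rw [← walkMetric_append, SimpleGraph.Walk.take_spec]
        _ ≤ walkMetric met wf m (p.bypass.dropUntil a hs) :=
            walkMetric_mono met wf hmono
              (walkMetric_le met wf hmono hb m _) _
    · calc walkMetric met wf m (SimpleGraph.Walk.cons ha p)
          = walkMetric met wf (met m (wf _)) p := walkMetric_cons met wf m ha p
        _ ≤ walkMetric met wf (met m (wf _)) p.bypass :=
            walkMetric_le_bypass p _
        _ = walkMetric met wf m (SimpleGraph.Walk.cons ha p.bypass) :=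
            (walkMetric_cons met wf m ha p.bypass).symm

end aux

/-- Lemma 1 (goodProperty): for a bounded monotonic metric on a finite connected
weighted graph with root set `R`, and any edge `{u,v}`:
`met (max_{ρ∈R} μ(u,ρ)) w_{u,v} ⪯ max_{ρ∈R} μ(v,ρ)`. -/
theorem good_property
    {V M W : Type*} [Fintype V] [DecidableEq V] [LinearOrder M] [Fintype M]
    (met : M → W → M) (wf : Sym2 V → W) (mr : M) (hmr : ∀ m : M, m ≤ mr)
    (hbounded : ∀ (m : M) (w : W), met m w < m ∨ met m w = m)
    (hmono : ∀ (m m' : M) (w : W), m < m' → met m w < met m' w ∨ met m w = met m' w)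
    (G : SimpleGraph V) [DecidableRel G.Adj] (hG : G.Connected)
    (R : Finset V) (hR : R.Nonempty)
    (v u : V) (hadj : G.Adj u v) :
    met (R.sup' hR fun ρ => mu met wf mr G hG u ρ) (wf s(u, v))
      ≤ R.sup' hR fun ρ => mu met wf mr G hG v ρ := by
  have hmono' : ∀ (m m' : M) (w : W), m ≤ m' → met m w ≤ met m' w := by
    intro m m' w h
    rcases lt_or_eq_of_le h with h | h
    · exact (hmono m m' w h).elim le_of_lt le_of_eq
    · subst h; exact le_refl _
  have hb' : ∀ (m : M) (w : W), met m w ≤ m := fun m w =>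
    (hbounded m w).elim le_of_lt le_of_eq
  obtain ⟨ρ₀, hρ₀R, hρ₀⟩ := Finset.exists_mem_eq_sup' hR
    (fun ρ => mu met wf mr G hG u ρ)
  obtain ⟨p, -, hp⟩ := Finset.exists_mem_eq_sup'
    (Finset.univ_nonempty_iff.mpr ((hG.preconnected ρ₀ u).elim fun p => ⟨p.toPath⟩))
    (fun p : G.Path ρ₀ u => walkMetric met wf mr p.val)
  set q : G.Walk ρ₀ v := p.val.append (SimpleGraph.Walk.cons hadj SimpleGraph.Walk.nil)
    with hq
  have hp' : mu met wf mr G hG u ρ₀ = walkMetric met wf mr p.val := hp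
  have hqm : walkMetric met wf mr q = met (mu met wf mr G hG u ρ₀) (wf s(u, v)) := by
    rw [hq, walkMetric_append, hp']
    simp [walkMetric]
  calc met (R.sup' hR fun ρ => mu met wf mr G hG u ρ) (wf s(u, v))
      = walkMetric met wf mr q := by rw [hqm, hρ₀]
    _ ≤ walkMetric met wf mr q.bypass :=
        walkMetric_le_bypass met wf hmono' hb' q mr
    _ ≤ mu met wf mr G hG v ρ₀ :=
        Finset.le_sup' (f := fun p : G.Path ρ₀ v => walkMetric met wf mr p.val)
          (b := ⟨q.bypass, q.bypass_isPath⟩) (Finset.mem_univ _)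
    _ ≤ R.sup' hR fun ρ => mu met wf mr G hG v ρ := Finset.le_sup' _ hρ₀R
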